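/- Let Ω ⊂ ℝ^d be a bounded convex open set with diameter R, and let v be a maximal monotone map on ℝ^d equal to the identity outside closure(Ω). Then for all a, b ∈ closure(Ω), ℓ_v(a,b) ≤ √(2R)·|b − a|^{1/2}, and for all a, b ∈ ℝ^d, ℓ_v(a,b) ≤ √2·|b−a|^{1/2}·(R + |b−a|)^{1/2}. -/

import Mathlib

/-- A set-valued map on `ℝ^d` is monotone. -/
def MonotoneSetMap {d : ℕ} (v : EuclideanSpace ℝ (Fin d) → Set (EuclideanSpace ℝ (Fin d))) :
    Prop :=
  ∀ x₁ x₂ y₁ y₂, y₁ ∈ v x₁ → y₂ ∈ v x₂ → 0 ≤ (inner ℝ (y₁ - y₂) (x₁ - x₂) : ℝ)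

/-- Maximal monotone set-valued map with full domain. -/
def MaxMonotone {d : ℕ} (v : EuclideanSpace ℝ (Fin d) → Set (EuclideanSpace ℝ (Fin d))) :
    Prop :=
  MonotoneSetMap v ∧ (∀ x, (v x).Nonempty) ∧
    ∀ w : EuclideanSpace ℝ (Fin d) → Set (EuclideanSpace ℝ (Fin d)),
      MonotoneSetMap w → (∀ x, v x ⊆ w x) → w = v

/-- `ℓ_v(a,b) := inf { √(2⟨b' − a', b − a⟩) : a' ∈ v(a), b' ∈ v(b) }`. -/
noncomputable def ellV {d : ℕ} (v : EuclideanSpace ℝ (Fin d) → Set (EuclideanSpace ℝ (Fin d)))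
    (a b : EuclideanSpace ℝ (Fin d)) : ℝ :=
  sInf {r : ℝ | ∃ a' ∈ v a, ∃ b' ∈ v b, r = Real.sqrt (2 * (inner ℝ (b' - a') (b - a) : ℝ))}

/-- `c_v(a,b)`: infimum over finite chains joining `a` to `b` of the sums of `ℓ_v`. -/
noncomputable def costV {d : ℕ} (v : EuclideanSpace ℝ (Fin d) → Set (EuclideanSpace ℝ (Fin d)))
    (a b : EuclideanSpace ℝ (Fin d)) : ℝ :=
  sInf {r : ℝ | ∃ (N : ℕ) (x : ℕ → EuclideanSpace ℝ (Fin d)), 0 < N ∧ x 0 = a ∧ x N = b ∧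
    r = ∑ i ∈ Finset.range N, ellV v (x i) (x (i+1))}

/-!
Let `K` be the bounded set outside which `v` is the identity. Testing the monotonicity of `v`
at `x` against a point `x + s • w ∉ K` gives `⟪x' - x, w⟫ ≤ s ‖w‖²` for every `x' ∈ v x`: along
any direction, `v` exceeds the identity by at most the distance to the exit from `K`. For `a, b ∈ K` and `w = b - a`, the exit distances beyond
`b` and before `a`, together with `‖w‖`, add up to the length of the chord of `K` through `a` and
`b`, which is at most `diam K`; hence `⟪b' - a', b - a⟫ ≤ diam K ‖b - a‖`. If one endpoint lies
outside `K` it contributes nothing, and the other contributes at most `diam K`, which gives the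
bound `(diam K + ‖b - a‖) ‖b - a‖`. Since `ℓ_v(a, b)² ≤ 2 ⟪b' - a', b - a⟫`, both estimates follow.
-/

open Metric

lemma ellV_le_sqrt_of_forall_inner_le {d : ℕ}
    {v : EuclideanSpace ℝ (Fin d) → Set (EuclideanSpace ℝ (Fin d))}
    {a b : EuclideanSpace ℝ (Fin d)} {c : ℝ} (ha : (v a).Nonempty) (hb : (v b).Nonempty)
    (h : ∀ a' ∈ v a, ∀ b' ∈ v b, inner ℝ (b' - a') (b - a) ≤ c) :
    ellV v a b ≤ √(2 * c) := by
  obtain ⟨a', ha'⟩ := ha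
  obtain ⟨b', hb'⟩ := hb
  calc ellV v a b ≤ √(2 * inner ℝ (b' - a') (b - a)) := by
        refine csInf_le ⟨0, ?_⟩ ⟨a', ha', b', hb', rfl⟩
        rintro r ⟨-, -, -, -, rfl⟩
        exact Real.sqrt_nonneg _
    _ ≤ √(2 * c) := Real.sqrt_le_sqrt (by linarith [h a' ha' b' hb'])

section IdentityOutside

variable {d : ℕ} {K : Set (EuclideanSpace ℝ (Fin d))}
  {v : EuclideanSpace ℝ (Fin d) → Set (EuclideanSpace ℝ (Fin d))}

lemma inner_sub_le_of_add_smul_notMem (hmono : MonotoneSetMap v)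
    (hid : ∀ x ∉ K, v x = {x}) {x x' w : EuclideanSpace ℝ (Fin d)} (hx' : x' ∈ v x)
    {s : ℝ} (hs : 0 < s) (hout : x + s • w ∉ K) :
    inner ℝ (x' - x) w ≤ s * ‖w‖ ^ 2 := by
  have hmem : x + s • w ∈ v (x + s • w) := by rw [hid _ hout]; rfl
  have h := hmono _ _ _ _ hx' hmem
  rw [show x' - (x + s • w) = (x' - x) - s • w by abel, show x - (x + s • w) = -(s • w) by abel,
    inner_neg_right, real_inner_smul_right, inner_sub_left, real_inner_smul_left,
    real_inner_self_eq_norm_sq] at h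
  nlinarith

lemma inner_sub_le_of_forall_add_smul_notMem (hmono : MonotoneSetMap v)
    (hid : ∀ x ∉ K, v x = {x}) {x x' w : EuclideanSpace ℝ (Fin d)} (hx' : x' ∈ v x)
    {t : ℝ} (ht : 0 ≤ t) (hout : ∀ s > t, x + s • w ∉ K) :
    inner ℝ (x' - x) w ≤ t * ‖w‖ ^ 2 := by
  have hlim : Filter.Tendsto (fun s => s * ‖w‖ ^ 2) (nhdsWithin t (Set.Ioi t))
      (nhds (t * ‖w‖ ^ 2)) :=
    ((continuous_id.mul continuous_const).tendsto t).mono_left nhdsWithin_le_nhds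
  exact ge_of_tendsto hlim (eventually_nhdsWithin_of_forall fun s hs =>
    inner_sub_le_of_add_smul_notMem hmono hid hx' (ht.trans_lt hs) (hout s hs))

lemma inner_sub_le_diam_mul_norm (hK : Bornology.IsBounded K) (hmono : MonotoneSetMap v)
    (hid : ∀ x ∉ K, v x = {x}) {x x' : EuclideanSpace ℝ (Fin d)} (hx' : x' ∈ v x)
    (w : EuclideanSpace ℝ (Fin d)) :
    inner ℝ (x' - x) w ≤ diam K * ‖w‖ := by
  by_cases hx : x ∉ K
  · rw [hid x hx, Set.mem_singleton_iff] at hx'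
    rw [hx', sub_self, inner_zero_left]
    exact mul_nonneg diam_nonneg (norm_nonneg w)
  rcases eq_or_ne w 0 with rfl | hw
  · simp
  have hw' : 0 < ‖w‖ := norm_pos_iff.mpr hw
  have hout : ∀ s > diam K / ‖w‖, x + s • w ∉ K := by
    intro s hs hmem
    have hdist : dist (x + s • w) x = s * ‖w‖ := by
      rw [dist_eq_norm, add_sub_cancel_left, norm_smul, Real.norm_of_nonneg
        ((div_nonneg diam_nonneg hw'.le).trans hs.le)]
    have := dist_le_diam_of_mem hK hmem (not_not.mp hx)
    rw [gt_iff_lt, div_lt_iff₀ hw'] at hs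
    linarith
  calc inner ℝ (x' - x) w ≤ diam K / ‖w‖ * ‖w‖ ^ 2 :=
        inner_sub_le_of_forall_add_smul_notMem hmono hid hx'
          (div_nonneg diam_nonneg hw'.le) hout
    _ = diam K * ‖w‖ := by field_simp

lemma inner_sub_le_diam_mul_norm_of_mem (hK : Bornology.IsBounded K) (hmono : MonotoneSetMap v)
    (hid : ∀ x ∉ K, v x = {x}) {a b a' b' : EuclideanSpace ℝ (Fin d)} (ha : a ∈ K) (hb : b ∈ K)
    (ha' : a' ∈ v a) (hb' : b' ∈ v b) :
    inner ℝ (b' - a') (b - a) ≤ diam K * ‖b - a‖ := by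
  set w := b - a
  rcases eq_or_ne w 0 with hw | hw
  · simp [hw]
  have hw' : 0 < ‖w‖ := norm_pos_iff.mpr hw
  -- `S` is the chord of `K` through `a` and `b`, parametrized so that `a ↦ 0` and `b ↦ 1`.
  set S : Set ℝ := (fun s : ℝ => a + s • w) ⁻¹' K
  have h0 : (0 : ℝ) ∈ S := by simpa [S] using ha
  have h1 : (1 : ℝ) ∈ S := by simpa [S, w] using hb
  have hdist : ∀ s ∈ S, ∀ s' ∈ S, dist s s' ≤ diam K / ‖w‖ := by
    intro s hs s' hs'
    have h := dist_le_diam_of_mem hK hs hs'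
    rw [dist_add_left, dist_eq_norm, ← sub_smul, norm_smul, ← dist_eq_norm] at h
    rwa [le_div_iff₀ hw']
  have hS : Bornology.IsBounded S := isBounded_iff.mpr ⟨_, hdist⟩
  have hchord : sSup S - sInf S ≤ diam K / ‖w‖ := by
    rw [← Real.diam_eq hS]
    exact diam_le_of_forall_dist_le (div_nonneg diam_nonneg hw'.le) hdist
  have hb_exit : inner ℝ (b' - b) w ≤ (sSup S - 1) * ‖w‖ ^ 2 := by
    refine inner_sub_le_of_forall_add_smul_notMem hmono hid hb'
      (sub_nonneg.mpr (le_csSup hS.bddAbove h1)) fun s hs hmem => ?_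
    refine notMem_of_csSup_lt (show sSup S < 1 + s by linarith) hS.bddAbove ?_
    have hline : a + (1 + s) • w = b + s • w := by simp only [add_smul, one_smul, w]; abel
    simpa only [S, Set.mem_preimage, hline] using hmem
  have ha_exit : inner ℝ (a' - a) (-w) ≤ -sInf S * ‖-w‖ ^ 2 := by
    refine inner_sub_le_of_forall_add_smul_notMem hmono hid ha'
      (neg_nonneg.mpr (csInf_le hS.bddBelow h0)) fun s hs hmem => ?_
    refine notMem_of_lt_csInf (show -s < sInf S by linarith) hS.bddBelow ?_
    simpa [S] using hmem
  have hsplit : inner ℝ (b' - a') w = inner ℝ (b' - b) w + ‖w‖ ^ 2 + inner ℝ (a' - a) (-w) := by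
    rw [show b' - a' = (b' - b) + w - (a' - a) by simp only [w]; abel, inner_sub_left,
      inner_add_left, real_inner_self_eq_norm_sq, inner_neg_right]
    ring
  rw [norm_neg] at ha_exit
  calc inner ℝ (b' - a') w ≤ (sSup S - sInf S) * ‖w‖ ^ 2 := by rw [hsplit]; linarith
    _ ≤ diam K / ‖w‖ * ‖w‖ ^ 2 := by gcongr
    _ = diam K * ‖w‖ := by field_simp

lemma inner_sub_le_diam_add_norm_mul_norm (hK : Bornology.IsBounded K)
    (hmono : MonotoneSetMap v) (hid : ∀ x ∉ K, v x = {x}) {a b a' b' : EuclideanSpace ℝ (Fin d)}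
    (ha' : a' ∈ v a) (hb' : b' ∈ v b) :
    inner ℝ (b' - a') (b - a) ≤ (diam K + ‖b - a‖) * ‖b - a‖ := by
  have hsplit : inner ℝ (b' - a') (b - a) =
      inner ℝ (b' - b) (b - a) + ‖b - a‖ ^ 2 + inner ℝ (a' - a) (a - b) := by
    rw [show b' - a' = (b' - b) + (b - a) - (a' - a) by abel, inner_sub_left, inner_add_left,
      real_inner_self_eq_norm_sq, ← neg_sub b a, inner_neg_right]
    ring
  have hA := inner_sub_le_diam_mul_norm hK hmono hid ha' (a - b)
  have hB := inner_sub_le_diam_mul_norm hK hmono hid hb' (b - a)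
  rw [norm_sub_rev] at hA
  by_cases ha : a ∈ K
  · by_cases hb : b ∈ K
    · nlinarith [inner_sub_le_diam_mul_norm_of_mem hK hmono hid ha hb ha' hb', norm_nonneg (b - a)]
    · rw [hid b hb, Set.mem_singleton_iff] at hb'
      rw [hsplit, hb', sub_self, inner_zero_left]
      linarith
  · rw [hid a ha, Set.mem_singleton_iff] at ha'
    rw [hsplit, ha', sub_self, inner_zero_left]
    linarith

end IdentityOutside

theorem stmt12 {d : ℕ} (Ω : Set (EuclideanSpace ℝ (Fin d)))
    (hΩb : Bornology.IsBounded Ω)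
    (v : EuclideanSpace ℝ (Fin d) → Set (EuclideanSpace ℝ (Fin d)))
    (hv : MaxMonotone v) (hid : ∀ x ∉ closure Ω, v x = {x}) :
    (∀ a ∈ closure Ω, ∀ b ∈ closure Ω,
      ellV v a b ≤ Real.sqrt (2 * Metric.diam Ω) * Real.sqrt ‖b - a‖) ∧
    (∀ a b : EuclideanSpace ℝ (Fin d),
      ellV v a b ≤ Real.sqrt 2 * Real.sqrt ‖b - a‖ * Real.sqrt (Metric.diam Ω + ‖b - a‖)) := by
  obtain ⟨hmono, hne, -⟩ := hv
  have hK := hΩb.closure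
  rw [← diam_closure]
  refine ⟨fun a ha b hb => ?_, fun a b => ?_⟩
  · calc ellV v a b ≤ √(2 * (diam (closure Ω) * ‖b - a‖)) :=
          ellV_le_sqrt_of_forall_inner_le (hne a) (hne b) fun a' ha' b' hb' =>
            inner_sub_le_diam_mul_norm_of_mem hK hmono hid ha hb ha' hb'
      _ = √(2 * diam (closure Ω)) * √‖b - a‖ := by
          rw [← mul_assoc, Real.sqrt_mul (by positivity)]
  · calc ellV v a b ≤ √(2 * ((diam (closure Ω) + ‖b - a‖) * ‖b - a‖)) :=
          ellV_le_sqrt_of_forall_inner_le (hne a) (hne b) fun a' ha' b' hb' =>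
            inner_sub_le_diam_add_norm_mul_norm hK hmono hid ha' hb'
      _ = √2 * √‖b - a‖ * √(diam (closure Ω) + ‖b - a‖) := by
          rw [mul_comm (_ + _), ← mul_assoc, Real.sqrt_mul (by positivity),
            Real.sqrt_mul (by positivity)]
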